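/- arXiv:math/0410343 — 4 statements merged into one kernel-verified Lean document; each statement's English description precedes it below -/
import Mathlib

section
/- For a standard complex Gaussian random variable ζ (i.e., with density π⁻¹ e^{-|z|²} with respect to Lebesgue measure on ℂ), the expectation of log|ζ| equals -γ/2, where γ is the Euler–Mascheroni constant. In particular, E[log|ζ|] is finite. -/
open MeasureTheory Real

/-!
In polar coordinates `∫_ℂ g (‖z‖²) dz = π ∫₀^∞ g t dt`, so `‖ζ‖²` is exponentially distributed
with mean `1`. Hence `E[log ‖ζ‖] = ½ ∫₀^∞ e⁻ᵗ log t dt = ½ Γ'(1) = -γ/2`.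
-/

/-- The distribution of a standard complex Gaussian random variable:
the measure on `ℂ` with density `z ↦ π⁻¹ exp (-|z|²)` with respect to
Lebesgue measure on `ℂ ≅ ℝ²`. -/
noncomputable def stdComplexGaussian : Measure ℂ :=
  volume.withDensity fun z => ENNReal.ofReal (π⁻¹ * Real.exp (-‖z‖ ^ 2))

open Set

section WithDensityOfReal

variable {α E : Type*} [MeasurableSpace α] {μ : Measure α} [NormedAddCommGroup E]
  [NormedSpace ℝ E] {ρ : α → ℝ}

theorem integrable_withDensity_ofReal_iff (hρ : Measurable ρ) (hρ₀ : ∀ᵐ x ∂μ, 0 ≤ ρ x)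
    {g : α → E} :
    Integrable g (μ.withDensity fun x => ENNReal.ofReal (ρ x)) ↔
      Integrable (fun x => ρ x • g x) μ := by
  rw [integrable_withDensity_iff_integrable_smul' hρ.ennreal_ofReal
    (.of_forall fun _ => ENNReal.ofReal_lt_top)]
  exact integrable_congr (hρ₀.mono fun x hx => by simp only [ENNReal.toReal_ofReal hx])

theorem integral_withDensity_ofReal (hρ : Measurable ρ) (hρ₀ : ∀ᵐ x ∂μ, 0 ≤ ρ x) (g : α → E) :
    ∫ x, g x ∂μ.withDensity (fun x => ENNReal.ofReal (ρ x)) = ∫ x, ρ x • g x ∂μ := by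
  rw [integral_withDensity_eq_integral_toReal_smul hρ.ennreal_ofReal
    (.of_forall fun _ => ENNReal.ofReal_lt_top)]
  exact integral_congr_ae (hρ₀.mono fun x hx => by simp only [ENNReal.toReal_ofReal hx])

end WithDensityOfReal

namespace Complex

variable {E : Type*} [NormedAddCommGroup E] [NormedSpace ℝ E]

theorem integrable_comp_norm_sq_iff {g : ℝ → E} :
    Integrable (fun z : ℂ => g (‖z‖ ^ 2)) ↔ IntegrableOn g (Ioi 0) := by
  rw [integrable_fun_norm_addHaar volume (f := fun r => g (r ^ 2)),
    ← integrableOn_Ioi_comp_rpow_iff' g two_ne_zero, finrank_real_complex]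
  norm_num [rpow_two]

theorem integral_comp_norm_sq (g : ℝ → E) :
    ∫ z : ℂ, g (‖z‖ ^ 2) = π • ∫ t in Ioi 0, g t := by
  have hball : volume.real (Metric.ball (0 : ℂ) 1) = π := by simp [Measure.real]
  rw [integral_fun_norm_addHaar volume (fun r => g (r ^ 2)), finrank_real_complex, hball,
    ← integral_comp_rpow_Ioi g two_ne_zero, show (2 : ℝ) - 1 = 1 by norm_num]
  simp only [Nat.add_one_sub_one, pow_one, rpow_one, rpow_two, abs_two, mul_smul,
    integral_smul]
  rw [smul_comm, two_smul, two_smul]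

end Complex

-- `Γ'(1) = -γ`, with `Γ'` computed by differentiating the Gamma integral under the integral sign.
theorem integral_exp_neg_mul_log :
    ∫ t in Ioi (0 : ℝ), exp (-t) * log t = -eulerMascheroniConstant := by
  have hΓ : HasDerivAt Complex.Gamma
      (∫ t in Ioi (0 : ℝ), (t : ℂ) ^ ((1 : ℂ) - 1) * (log t * exp (-t))) 1 := by
    refine (Complex.hasDerivAt_GammaIntegral (by norm_num)).congr_of_eventuallyEq ?_
    filter_upwards [Complex.continuous_re.isOpen_preimage _ isOpen_Ioi |>.mem_nhds
      (by norm_num : (1 : ℂ) ∈ Complex.re ⁻¹' Ioi 0)] with s hs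
    exact Complex.Gamma_eq_integral hs
  have hderiv := hΓ.unique Complex.hasDerivAt_Gamma_one
  simp only [sub_self, Complex.cpow_zero, one_mul] at hderiv
  norm_cast at hderiv
  simpa only [mul_comm] using hderiv

-- A non-integrable function has Bochner integral `0`.
theorem integrableOn_exp_neg_mul_log :
    IntegrableOn (fun t => exp (-t) * log t) (Ioi 0) :=
  .of_integral_ne_zero <| by
    rw [integral_exp_neg_mul_log, neg_ne_zero]
    exact (one_half_pos.trans one_half_lt_eulerMascheroniConstant).ne'

/-- For a standard complex Gaussian random variable `ζ`, the expectation of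
`log |ζ|` is finite and equals `-γ/2`, where `γ` is the Euler–Mascheroni
constant. -/
theorem integral_log_abs_stdComplexGaussian :
    Integrable (fun z : ℂ => Real.log (‖z‖)) stdComplexGaussian ∧
    ∫ z : ℂ, Real.log (‖z‖) ∂stdComplexGaussian
      = -Real.eulerMascheroniConstant / 2 := by
  have hρ : Measurable fun z : ℂ => π⁻¹ * exp (-‖z‖ ^ 2) := by fun_prop
  have hρ₀ : ∀ᵐ z : ℂ, 0 ≤ π⁻¹ * exp (-‖z‖ ^ 2) := .of_forall fun z => by positivity
  have hlog : (fun z : ℂ => (π⁻¹ * exp (-‖z‖ ^ 2)) • log ‖z‖) =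
      fun z => (2 * π)⁻¹ * (exp (-(‖z‖ ^ 2)) * log (‖z‖ ^ 2)) := by
    ext z
    rw [log_pow, smul_eq_mul]
    field_simp
    ring
  rw [stdComplexGaussian, integrable_withDensity_ofReal_iff hρ hρ₀,
    integral_withDensity_ofReal hρ hρ₀, hlog,
    Complex.integrable_comp_norm_sq_iff (g := fun t => (2 * π)⁻¹ * (exp (-t) * log t)),
    Complex.integral_comp_norm_sq (fun t => (2 * π)⁻¹ * (exp (-t) * log t))]
  refine ⟨integrableOn_exp_neg_mul_log.const_mul _, ?_⟩
  rw [integral_const_mul, integral_exp_neg_mul_log, smul_eq_mul]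
  field_simp
end

section
/- Let f and g be two holomorphic functions on a domain G (or more generally, two sequences of holomorphic functions defining kernels K_f(z,w) = ∑_k f_k(z)\overline{f_k(w)} and K_g(z,w) = ∑_k g_k(z)\overline{g_k(w)}, convergent locally uniformly). If K_f(z,z) = K_g(z,z) for all z ∈ G, then K_f(z,w) = K_g(z,w) for all z, w ∈ G. -/
/-!
Write `D = K_f - K_g`. Along the path `t ↦ (a + t, a + conj t)` the partial sums of `D` are
holomorphic in `t`, hence so is their locally uniform limit; on real `t` this path runs along the
diagonal, where `D` vanishes, so by the identity theorem `D (a + t) (a + conj t) = 0` for all small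
`t`. Taking `a = w + s i` and `t = s i` gives `D (w + 2 s i) w = 0` for small real `s`, and the
identity theorem for the holomorphic function `z ↦ D z w` on the connected set `G` finishes.
-/

open Filter Topology Set Metric ComplexConjugate

theorem eqOn_zero_of_eventually_eq_zero_on_line {h : ℂ → ℂ} {U : Set ℂ}
    (hh : DifferentiableOn ℂ h U) (hU : IsOpen U) (hUc : IsPreconnected U) {x v : ℂ}
    (hx : x ∈ U) (hv : v ≠ 0) (h0 : ∀ᶠ s : ℝ in 𝓝 0, h (x + s * v) = 0) :
    EqOn h 0 U := by
  refine (hh.analyticOnNhd hU).eqOn_zero_of_preconnected_of_frequently_eq_zero hUc hx ?_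
  have hline : Tendsto (fun s : ℝ => x + s * v) (𝓝[≠] 0) (𝓝[≠] x) := by
    refine tendsto_nhdsWithin_iff.2 ⟨?_, eventually_nhdsWithin_of_forall fun s hs => ?_⟩
    · have hcont : Continuous (fun s : ℝ => x + s * v) := by fun_prop
      simpa using (hcont.tendsto 0).mono_left nhdsWithin_le_nhds
    · simpa [hv] using hs
  exact hline.frequently (h0.filter_mono nhdsWithin_le_nhds).frequently

theorem TendstoLocallyUniformlyOn.differentiableOn_comp {α ι : Type*} [TopologicalSpace α]
    {l : Filter ι} [l.NeBot] {F : ι → α → ℂ} {K : α → ℂ} {s : Set α}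
    (hF : TendstoLocallyUniformlyOn F K l s) {φ : ℂ → α} {U : Set ℂ} (hU : IsOpen U)
    (hφ : ContinuousOn φ U) (hmaps : MapsTo φ U s)
    (hd : ∀ᶠ n in l, DifferentiableOn ℂ (fun t => F n (φ t)) U) :
    DifferentiableOn ℂ (fun t => K (φ t)) U :=
  (hF.comp φ hmaps hφ).differentiableOn hd hU

section Sesquiholomorphic

variable {G : Set ℂ} {D : ℂ → ℂ → ℂ}

theorem eq_zero_along_conj_path_of_diag_eq_zero {a : ℂ}
    (hpath : DifferentiableOn ℂ (fun t => D (a + t) (a + conj t))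
      {t | a + t ∈ G ∧ a + conj t ∈ G})
    (hdiag : ∀ z ∈ G, D z z = 0) {r : ℝ}
    (hr : ∀ t ∈ ball (0 : ℂ) r, a + t ∈ G ∧ a + conj t ∈ G) {t : ℂ} (ht : t ∈ ball 0 r) :
    D (a + t) (a + conj t) = 0 := by
  refine eqOn_zero_of_eventually_eq_zero_on_line (hpath.mono hr) isOpen_ball
    (convex_ball 0 r).isPreconnected (mem_ball_self (pos_of_mem_ball ht)) one_ne_zero ?_ ht
  have hreal : Tendsto (fun s : ℝ => (s : ℂ)) (𝓝 0) (𝓝 0) :=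
    Complex.continuous_ofReal.tendsto' 0 0 Complex.ofReal_zero
  filter_upwards [hreal (ball_mem_nhds 0 (pos_of_mem_ball ht))] with s hs
  have hs' : (0 : ℂ) + s * 1 ∈ ball 0 r := by simpa using hs
  simpa [Complex.conj_ofReal] using hdiag _ (hr _ hs').1

theorem eq_zero_of_diag_eq_zero (hG : IsOpen G) (hGc : IsPreconnected G)
    (hleft : ∀ w ∈ G, DifferentiableOn ℂ (fun z => D z w) G)
    (hpath : ∀ a, DifferentiableOn ℂ (fun t => D (a + t) (a + conj t))
      {t | a + t ∈ G ∧ a + conj t ∈ G})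
    (hdiag : ∀ z ∈ G, D z z = 0) {z w : ℂ} (hz : z ∈ G) (hw : w ∈ G) :
    D z w = 0 := by
  obtain ⟨ε, hε, hball⟩ := isOpen_iff.1 hG w hw
  refine eqOn_zero_of_eventually_eq_zero_on_line (hleft w hw) hG hGc hw
    (v := 2 * Complex.I) (by simp) ?_ hz
  filter_upwards [ball_mem_nhds (0 : ℝ) (half_pos hε)] with s hs
  have hsI : (s * Complex.I : ℂ) ∈ ball 0 (ε / 2) := by simpa using hs
  have hnear : ∀ u ∈ ball (0 : ℂ) (ε / 2), w + s * Complex.I + u ∈ G := fun u hu => by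
    refine hball ?_
    rw [mem_ball_zero_iff] at hsI hu
    calc dist (w + s * Complex.I + u) w = ‖(s * Complex.I : ℂ) + u‖ := by
          rw [dist_eq_norm, add_assoc, add_sub_cancel_left]
      _ ≤ ‖(s * Complex.I : ℂ)‖ + ‖u‖ := norm_add_le _ _
      _ < ε := by linarith
  have hr : ∀ u ∈ ball (0 : ℂ) (ε / 2),
      w + s * Complex.I + u ∈ G ∧ w + s * Complex.I + conj u ∈ G := fun u hu =>
    ⟨hnear u hu, hnear _ (by simpa [Complex.norm_conj] using hu)⟩
  have h := eq_zero_along_conj_path_of_diag_eq_zero (hpath _) hdiag hr hsI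
  have hconj : conj (s * Complex.I : ℂ) = -(s * Complex.I) := by simp [Complex.conj_ofReal]
  rw [hconj, add_neg_cancel_right] at h
  convert h using 2
  ring

end Sesquiholomorphic

section KernelPartialSum

variable {G : Set ℂ} {f : ℕ → ℂ → ℂ}

def kernelPartialSum (f : ℕ → ℂ → ℂ) (N : ℕ) (p : ℂ × ℂ) : ℂ :=
  ∑ k ∈ Finset.range N, f k p.1 * conj (f k p.2)

theorem differentiableOn_kernelPartialSum_left (hf : ∀ k, DifferentiableOn ℂ (f k) G)
    (w : ℂ) (N : ℕ) : DifferentiableOn ℂ (fun z => kernelPartialSum f N (z, w)) G :=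
  DifferentiableOn.fun_sum fun k _ => (hf k).mul_const (conj (f k w))

theorem differentiableOn_kernelPartialSum_conj_path (hG : IsOpen G)
    (hf : ∀ k, DifferentiableOn ℂ (f k) G) (a : ℂ) (N : ℕ) :
    DifferentiableOn ℂ (fun t => kernelPartialSum f N (a + t, a + conj t))
      {t | a + t ∈ G ∧ a + conj t ∈ G} := by
  intro t ht
  refine (DifferentiableAt.fun_sum fun k _ => ?_).differentiableWithinAt
  have hshift : ∀ {u}, a + u ∈ G → DifferentiableAt ℂ (fun u => f k (a + u)) u := fun hu =>
    ((hf k).differentiableAt (hG.mem_nhds hu)).comp _ (by fun_prop)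
  have hreflect : DifferentiableAt ℂ (conj ∘ (fun u => f k (a + u)) ∘ conj) t :=
    differentiableAt_conj_conj_iff.2 (hshift ht.2)
  exact (hshift ht.1).mul hreflect

end KernelPartialSum

theorem kernel_determined_by_diagonal_general
    (G : Set ℂ) (hG : IsOpen G) (hGc : IsConnected G)
    (f g : ℕ → ℂ → ℂ)
    (hf : ∀ k, DifferentiableOn ℂ (f k) G)
    (hg : ∀ k, DifferentiableOn ℂ (g k) G)
    (Kf Kg : ℂ → ℂ → ℂ)
    (hconvf : TendstoLocallyUniformlyOn
      (fun N p => ∑ k ∈ Finset.range N, f k p.1 * starRingEnd ℂ (f k p.2))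
      (fun p : ℂ × ℂ => Kf p.1 p.2) atTop (G ×ˢ G))
    (hconvg : TendstoLocallyUniformlyOn
      (fun N p => ∑ k ∈ Finset.range N, g k p.1 * starRingEnd ℂ (g k p.2))
      (fun p : ℂ × ℂ => Kg p.1 p.2) atTop (G ×ˢ G))
    (hdiag : ∀ z ∈ G, Kf z z = Kg z z) :
    ∀ z ∈ G, ∀ w ∈ G, Kf z w = Kg z w := by
  have hlim : TendstoLocallyUniformlyOn
      (fun N p => kernelPartialSum f N p - kernelPartialSum g N p)
      (fun p => Kf p.1 p.2 - Kg p.1 p.2) atTop (G ×ˢ G) := hconvf.sub hconvg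
  have hleft : ∀ w ∈ G, DifferentiableOn ℂ (fun z => Kf z w - Kg z w) G := fun w hw =>
    hlim.differentiableOn_comp hG (by fun_prop) (fun z hz => ⟨hz, hw⟩) <| .of_forall fun N =>
      (differentiableOn_kernelPartialSum_left hf w N).sub
        (differentiableOn_kernelPartialSum_left hg w N)
  have hpath : ∀ a, DifferentiableOn ℂ
      (fun t => Kf (a + t) (a + conj t) - Kg (a + t) (a + conj t))
      {t | a + t ∈ G ∧ a + conj t ∈ G} := fun a =>
    hlim.differentiableOn_comp ((hG.preimage (by fun_prop)).inter (hG.preimage (by fun_prop)))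
      (by fun_prop) (fun t ht => ht) <| .of_forall fun N =>
      (differentiableOn_kernelPartialSum_conj_path hG hf a N).sub
        (differentiableOn_kernelPartialSum_conj_path hG hg a N)
  intro z hz w hw
  exact sub_eq_zero.1 <| eq_zero_of_diag_eq_zero hG hGc.isPreconnected hleft hpath
    (fun z hz => sub_eq_zero.2 (hdiag z hz)) hz hw

/-- Calabi rigidity, key step: a hermitian kernel `K(z,w) = ∑_k f_k(z) f_k(w)̄`
built from holomorphic functions on a connected open set `G` (holomorphic in
`z`, anti-holomorphic in `w`) is determined by its values on the diagonal:
if `K_f(z,z) = K_g(z,z)` for all `z ∈ G`, then `K_f = K_g` on `G × G`. -/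
theorem kernel_determined_by_diagonal
    (G : Set ℂ) (hG : IsOpen G) (hGc : IsConnected G)
    (f g : ℕ → ℂ → ℂ)
    (hf : ∀ k, DifferentiableOn ℂ (f k) G)
    (hg : ∀ k, DifferentiableOn ℂ (g k) G)
    (Kf Kg : ℂ → ℂ → ℂ)
    (hKf : ∀ z w, Kf z w = ∑' k, f k z * starRingEnd ℂ (f k w))
    (hKg : ∀ z w, Kg z w = ∑' k, g k z * starRingEnd ℂ (g k w))
    (hconvf : TendstoLocallyUniformlyOn
      (fun N p => ∑ k ∈ Finset.range N, f k p.1 * starRingEnd ℂ (f k p.2))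
      (fun p : ℂ × ℂ => Kf p.1 p.2) atTop (G ×ˢ G))
    (hconvg : TendstoLocallyUniformlyOn
      (fun N p => ∑ k ∈ Finset.range N, g k p.1 * starRingEnd ℂ (g k p.2))
      (fun p : ℂ × ℂ => Kg p.1 p.2) atTop (G ×ˢ G))
    (hdiag : ∀ z ∈ G, Kf z z = Kg z z) :
    ∀ z ∈ G, ∀ w ∈ G, Kf z w = Kg z w :=
  kernel_determined_by_diagonal_general G hG hGc f g hf hg Kf Kg hconvf hconvg hdiag
end

section
/- With X_j independent Bernoulli with success probability ρ^{2j}, the probability that ∑_{j=1}^∞ X_j = 0 equals ∏_{j=1}^∞ (1 - ρ^{2j}), and as ρ → 1⁻, log ∏_{j=1}^∞ (1 - ρ^{2j}) = -(π² + o(1))/(6(1-ρ²)). Consequently the hole probability satisfies P(N = 0) = exp(-(π²/12 + o(1))/(1-ρ)). -/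
open MeasureTheory ProbabilityTheory Filter Real Finset Topology

/-!
Off a null set only finitely many `X_j` are nonzero (Borel–Cantelli, as `∑ ρ^{2j} < ∞`), so
`{N = 0}` agrees a.s. with `⋂_j {X_j = 0}`, whose probability is `∏ (1 - ρ^{2j})` by independence
and continuity from above.

For the asymptotics write `q = ρ²`. Then `-(1 - q) log ∏_{j≥1} (1 - q^j)` is the series
`∑_{k≥1} q^k / (k (1 + q + ⋯ + q^{k-1}))`, whose terms are dominated by `1/k²` and tend to `1/k²`
as `q → 1`; by Tannery's theorem the limit is `ζ(2) = π²/6`. Finally `1 - ρ² ∼ 2 (1 - ρ)`.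
-/

/-- `-log ∏_{j≥1} (1 - q^j)`: expanding each `log (1 - q^j)` and summing the double series
`∑_{j,k≥1} q^{jk}/k` by columns gives `∑_{k≥1} q^k / (k (1 - q^k))`. -/
noncomputable def eulerLogSeries (q : ℝ) : ℝ :=
  ∑' k : ℕ, q ^ (k + 1) / ((k + 1) * (1 - q ^ (k + 1)))

section EulerFunction

variable {q : ℝ}

lemma hasSum_log_one_sub_pow (hq0 : 0 ≤ q) (hq1 : q < 1) :
    HasSum (fun j : ℕ => log (1 - q ^ (j + 1))) (-eulerLogSeries q) := by
  have hpow : ∀ n : ℕ, 0 ≤ q ^ (n + 1) ∧ q ^ (n + 1) < 1 := fun n =>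
    ⟨pow_nonneg hq0 _, pow_lt_one₀ hq0 hq1 n.succ_ne_zero⟩
  set f : ℕ × ℕ → ℝ := fun p => q ^ ((p.1 + 1) * (p.2 + 1)) / (p.2 + 1)
  have hrow (j : ℕ) : HasSum (fun k => f (j, k)) (-log (1 - q ^ (j + 1))) := by
    have h := hasSum_pow_div_log_of_abs_lt_one
      (by rw [abs_of_nonneg (hpow j).1]; exact (hpow j).2)
    simpa only [f, pow_mul] using h
  have hcol (k : ℕ) :
      HasSum (fun j => f (j, k)) (q ^ (k + 1) / ((k + 1) * (1 - q ^ (k + 1)))) := by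
    have h := (hasSum_geometric_of_lt_one (hpow k).1 (hpow k).2).mul_left (q ^ (k + 1) / (k + 1))
    rw [← div_eq_mul_inv, div_div] at h
    refine h.congr_fun fun j => ?_
    simp only [f]
    ring
  have hsum : Summable f := by
    refine (summable_prod_of_nonneg fun p => by positivity).2 ⟨fun j => (hrow j).summable, ?_⟩
    simp only [fun j => (hrow j).tsum_eq]
    simpa [sub_eq_add_neg, pow_succ'] using
      (summable_log_one_add_of_summable ((summable_geometric_of_lt_one hq0 hq1).mul_left (-q))).neg
  obtain ⟨S, hS⟩ := hsum
  have hcols := ((Equiv.prodComm ℕ ℕ).hasSum_iff.2 hS).prod_fiberwise hcol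
  simpa [eulerLogSeries, hcols.tsum_eq] using (hS.prod_fiberwise hrow).neg

lemma hasProd_one_sub_pow (hq0 : 0 ≤ q) (hq1 : q < 1) :
    HasProd (fun j : ℕ => 1 - q ^ (j + 1)) (exp (-eulerLogSeries q)) :=
  hasProd_of_hasSum_log (fun j => sub_pos.2 (pow_lt_one₀ hq0 hq1 j.succ_ne_zero))
    (hasSum_log_one_sub_pow hq0 hq1)

lemma log_tprod_one_sub_pow (hq0 : 0 ≤ q) (hq1 : q < 1) :
    log (∏' j : ℕ, (1 - q ^ (j + 1))) = -eulerLogSeries q := by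
  rw [(hasProd_one_sub_pow hq0 hq1).tprod_eq, log_exp]

lemma hasSum_one_div_succ_sq : HasSum (fun k : ℕ => 1 / ((k : ℝ) + 1) ^ 2) (π ^ 2 / 6) := by
  simpa using (hasSum_nat_add_iff' 1).2 hasSum_zeta_two

lemma one_sub_mul_pow_div_one_sub_pow (hq : q ≠ 1) (k : ℕ) :
    (1 - q) * (q ^ (k + 1) / ((k + 1) * (1 - q ^ (k + 1))))
      = q ^ (k + 1) / ((k + 1) * ∑ i ∈ range (k + 1), q ^ i) := by
  have hgeom : 1 - q ^ (k + 1) = (1 - q) * ∑ i ∈ range (k + 1), q ^ i := by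
    rw [mul_comm, geom_sum_mul_neg]
  have hq' : 1 - q ≠ 0 := sub_ne_zero.2 hq.symm
  rw [hgeom, mul_left_comm, mul_div_assoc', mul_div_mul_left _ _ hq']

lemma pow_div_mul_geom_sum_le (hq0 : 0 ≤ q) (hq1 : q ≤ 1) (k : ℕ) :
    q ^ (k + 1) / ((k + 1) * ∑ i ∈ range (k + 1), q ^ i) ≤ 1 / ((k : ℝ) + 1) ^ 2 := by
  have hsum : (k + 1) * q ^ (k + 1) ≤ ∑ i ∈ range (k + 1), q ^ i := by
    simpa using card_nsmul_le_sum (range (k + 1)) (q ^ ·) (q ^ (k + 1))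
      fun i hi => pow_le_pow_of_le_one hq0 hq1 (mem_range.1 hi).le
  have hpos : 0 < ∑ i ∈ range (k + 1), q ^ i := geom_sum_pos hq0 k.succ_ne_zero
  rw [div_le_div_iff₀ (by positivity) (by positivity)]
  nlinarith

lemma tendsto_one_sub_mul_eulerLogSeries :
    Tendsto (fun q => (1 - q) * eulerLogSeries q) (𝓝[<] 1) (𝓝 (π ^ 2 / 6)) := by
  set F : ℝ → ℕ → ℝ := fun q k => q ^ (k + 1) / ((k + 1) * ∑ i ∈ range (k + 1), q ^ i)
  have hlim (k : ℕ) : Tendsto (F · k) (𝓝[<] 1) (𝓝 (1 / ((k : ℝ) + 1) ^ 2)) := by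
    have hcont : ContinuousAt (F · k) 1 :=
      (continuous_pow _).continuousAt.div (continuousAt_const.mul
        (continuous_finsetSum _ fun i _ => continuous_pow i).continuousAt) (by simp; positivity)
    convert hcont.tendsto.mono_left nhdsWithin_le_nhds using 2
    simp [F, sq]
  have hbound : ∀ᶠ q in 𝓝[<] (1 : ℝ), ∀ k, ‖F q k‖ ≤ 1 / ((k : ℝ) + 1) ^ 2 := by
    filter_upwards [Ioo_mem_nhdsLT (zero_lt_one' ℝ)] with q ⟨hq0, hq1⟩ k
    rw [norm_of_nonneg (by positivity)]
    exact pow_div_mul_geom_sum_le hq0.le hq1.le k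
  rw [← hasSum_one_div_succ_sq.tsum_eq]
  refine (tendsto_tsum_of_dominated_convergence hasSum_one_div_succ_sq.summable hlim
    hbound).congr' ?_
  filter_upwards [self_mem_nhdsWithin] with q hq
  rw [eulerLogSeries, ← tsum_mul_left]
  exact tsum_congr fun k => (one_sub_mul_pow_div_one_sub_pow hq.ne k).symm

lemma tendsto_one_sub_mul_log_tprod_one_sub_pow :
    Tendsto (fun q => (1 - q) * log (∏' j : ℕ, (1 - q ^ (j + 1)))) (𝓝[<] 1)
      (𝓝 (-(π ^ 2 / 6))) := by
  refine tendsto_one_sub_mul_eulerLogSeries.neg.congr' ?_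
  filter_upwards [Ioo_mem_nhdsLT (zero_lt_one' ℝ)] with q hq
  rw [log_tprod_one_sub_pow hq.1.le hq.2, mul_neg]

end EulerFunction

lemma tendsto_sq_nhdsLT_one : Tendsto (fun r : ℝ => r ^ 2) (𝓝[<] 1) (𝓝[<] 1) := by
  refine tendsto_nhdsWithin_iff.2 ⟨?_, ?_⟩
  · simpa using ((continuous_pow 2).tendsto (1 : ℝ)).mono_left nhdsWithin_le_nhds
  · filter_upwards [Ioo_mem_nhdsLT (zero_lt_one' ℝ)] with r hr
    exact pow_lt_one₀ hr.1.le hr.2 two_ne_zero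

lemma tendsto_one_sub_sq_mul_log_tprod_one_sub_pow_two_mul :
    Tendsto (fun r : ℝ => (1 - r ^ 2) * log (∏' j : ℕ, (1 - r ^ (2 * (j + 1))))) (𝓝[<] 1)
      (𝓝 (-(π ^ 2 / 6))) := by
  simpa only [pow_mul, Function.comp_def] using
    tendsto_one_sub_mul_log_tprod_one_sub_pow.comp tendsto_sq_nhdsLT_one

lemma tendsto_one_sub_mul_log_tprod_one_sub_pow_two_mul :
    Tendsto (fun r : ℝ => (1 - r) * log (∏' j : ℕ, (1 - r ^ (2 * (j + 1))))) (𝓝[<] 1)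
      (𝓝 (-(π ^ 2 / 12))) := by
  have hinv : Tendsto (fun r : ℝ => (1 + r)⁻¹) (𝓝[<] 1) (𝓝 2⁻¹) := by
    have h : Tendsto (fun r : ℝ => (1 + r)⁻¹) (𝓝 1) (𝓝 (1 + 1)⁻¹) :=
      ((continuous_const.add continuous_id).tendsto 1).inv₀ (by norm_num)
    simpa [one_add_one_eq_two] using h.mono_left nhdsWithin_le_nhds
  have h := tendsto_one_sub_sq_mul_log_tprod_one_sub_pow_two_mul.mul hinv
  rw [show -(π ^ 2 / 6) * 2⁻¹ = -(π ^ 2 / 12) by ring] at h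
  refine h.congr' ?_
  filter_upwards [Ioo_mem_nhdsLT (zero_lt_one' ℝ)] with r hr
  have : 1 + r ≠ 0 := by linarith [hr.1]
  field_simp
  ring

namespace ProbabilityTheory

variable {Ω : Type*} [MeasurableSpace Ω] {μ : Measure Ω}

lemma iIndepFun.iIndepSet_preimage {β : Type*} [MeasurableSpace β] {X : ℕ → Ω → β}
    (hind : iIndepFun X μ) (hmeas : ∀ j, Measurable (X j)) {s : ℕ → Set β}
    (hs : ∀ j, MeasurableSet (s j)) : iIndepSet (fun j => X j ⁻¹' s j) μ :=
  (iIndepSet_iff_meas_biInter fun j => hmeas j (hs j)).2 fun _ =>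
    hind.meas_biInter fun j _ => ⟨s j, hs j, rfl⟩

lemma iIndepSet.measure_iInter_eq_ofReal {S : ℕ → Set Ω} (hind : iIndepSet S μ)
    (hS : ∀ j, MeasurableSet (S j)) {a : ℕ → ℝ} (ha : ∀ j, μ (S j) = ENNReal.ofReal (a j))
    (ha0 : ∀ j, 0 ≤ a j) {A : ℝ} (hA : HasProd a A) :
    μ (⋂ j, S j) = ENNReal.ofReal A := by
  have := hind.isProbabilityMeasure
  have hlim : Tendsto (fun n => μ (⋂ j ∈ range n, S j)) atTop (𝓝 (μ (⋂ j, S j))) := by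
    have hinter : ⋂ n, ⋂ j ∈ range n, S j = ⋂ j, S j := by
      ext ω
      simp only [Set.mem_iInter, mem_range]
      exact ⟨fun h j => h (j + 1) j j.lt_succ_self, fun h _ j _ => h j⟩
    rw [← hinter]
    exact tendsto_measure_iInter_atTop
      (fun n => (MeasurableSet.biInter (Set.to_countable _) fun j _ => hS j).nullMeasurableSet)
      (fun m n hmn => Set.biInter_subset_biInter_left fun j hj => range_mono hmn hj)
      ⟨0, measure_ne_top _ _⟩
  refine tendsto_nhds_unique hlim ?_
  simp only [hind.meas_biInter, ha, ← ENNReal.ofReal_prod_of_nonneg fun j _ => ha0 j]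
  exact (ENNReal.continuous_ofReal.tendsto A).comp hA.tendsto_prod_nat

lemma measure_tsum_eq_zero_eq_measure_iInter {X : ℕ → Ω → ℝ} (hX : ∀ j ω, 0 ≤ X j ω)
    (hsum : ∑' j, μ {ω | X j ω ≠ 0} ≠ ⊤) :
    μ {ω | ∑' j, X j ω = 0} = μ (⋂ j, {ω | X j ω = 0}) := by
  refine measure_congr (eventuallyEq_set.2 ?_)
  filter_upwards [ae_eventually_notMem hsum] with ω hω
  obtain ⟨N, hN⟩ := eventually_atTop.1 hω
  have hsummable : Summable fun j => X j ω :=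
    summable_of_ne_finset_zero (s := range N) fun j hj => by
      simpa using hN j (by simpa using hj)
  simp only [Set.mem_ofPred_eq, Set.mem_iInter, ← hsummable.hasSum_iff,
    hasSum_zero_iff_of_nonneg (hX · ω), funext_iff, Pi.zero_apply]

lemma iIndepFun.measure_tsum_eq_zero {X : ℕ → Ω → ℝ} (hind : iIndepFun X μ)
    (hmeas : ∀ j, Measurable (X j)) (hval : ∀ j ω, X j ω = 0 ∨ X j ω = 1) {p : ℕ → ℝ}
    (hp0 : ∀ j, 0 ≤ p j) (hp : Summable p)
    (hdist : ∀ j, μ {ω | X j ω = 1} = ENNReal.ofReal (p j)) :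
    μ {ω | ∑' j, X j ω = 0} = ENNReal.ofReal (∏' j, (1 - p j)) := by
  have := hind.isProbabilityMeasure
  have hne (j : ℕ) : {ω | X j ω ≠ 0} = {ω | X j ω = 1} := by
    ext ω; rcases hval j ω with h | h <;> simp [h]
  have hzero (j : ℕ) : μ {ω | X j ω = 0} = ENNReal.ofReal (1 - p j) := by
    rw [← compl_compl {ω | X j ω = 0}, Set.compl_ofPred, hne,
      prob_compl_eq_one_sub (s := {ω | X j ω = 1}) (hmeas j (measurableSet_singleton 1)),
      hdist, ENNReal.ofReal_sub _ (hp0 j), ENNReal.ofReal_one]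
  have hsum : ∑' j, μ {ω | X j ω ≠ 0} ≠ ⊤ := by
    simp_rw [hne, hdist, ← ENNReal.ofReal_tsum_of_nonneg hp0 hp]
    exact ENNReal.ofReal_ne_top
  have hp1 (j : ℕ) : p j ≤ 1 := ENNReal.ofReal_le_one.1 (hdist j ▸ prob_le_one)
  have hmult : Multipliable fun j => 1 - p j := by
    simpa [sub_eq_add_neg] using Real.multipliable_one_add_of_summable hp.neg
  have hX (j : ℕ) (ω : Ω) : 0 ≤ X j ω := by rcases hval j ω with h | h <;> simp [h]
  rw [measure_tsum_eq_zero_eq_measure_iInter hX hsum]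
  exact (hind.iIndepSet_preimage hmeas fun _ => measurableSet_singleton 0).measure_iInter_eq_ofReal
    (fun j => hmeas j (measurableSet_singleton 0)) hzero (fun j => sub_nonneg.2 (hp1 j))
    hmult.hasProd

end ProbabilityTheory

theorem bernoulli_hole_probability_general
    {Ω : Type*} [MeasurableSpace Ω] (P : Measure Ω)
    (ρ : ℝ) (hρ : ρ ∈ Set.Ioo (0 : ℝ) 1)
    (X : ℕ → Ω → ℝ) (hmeas : ∀ j, Measurable (X j))
    (hind : iIndepFun X P)
    (hval : ∀ j ω, X j ω = 0 ∨ X j ω = 1)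
    (hdist : ∀ j, P {ω | X j ω = 1} = ENNReal.ofReal (ρ ^ (2 * (j + 1)))) :
    (P {ω | (∑' j, X j ω) = 0}
        = ENNReal.ofReal (∏' j : ℕ, (1 - ρ ^ (2 * (j + 1))))) ∧
    Tendsto (fun r : ℝ => (1 - r ^ 2) * Real.log (∏' j : ℕ, (1 - r ^ (2 * (j + 1)))))
      (nhdsWithin 1 (Set.Iio 1)) (nhds (-(Real.pi ^ 2 / 6))) ∧
    Tendsto (fun r : ℝ => (1 - r) * Real.log (∏' j : ℕ, (1 - r ^ (2 * (j + 1)))))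
      (nhdsWithin 1 (Set.Iio 1)) (nhds (-(Real.pi ^ 2 / 12))) := by
  have hgeom : Summable fun j : ℕ => ρ ^ (2 * (j + 1)) :=
    ((summable_nat_add_iff 1).2 (summable_geometric_of_lt_one (sq_nonneg ρ)
      (pow_lt_one₀ hρ.1.le hρ.2 two_ne_zero))).congr fun j => (pow_mul ρ 2 (j + 1)).symm
  exact ⟨hind.measure_tsum_eq_zero hmeas hval (fun j => pow_nonneg hρ.1.le _) hgeom hdist,
    tendsto_one_sub_sq_mul_log_tprod_one_sub_pow_two_mul,
    tendsto_one_sub_mul_log_tprod_one_sub_pow_two_mul⟩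

/-- With `X_j` independent Bernoulli of success probability `ρ^{2j}` (indexed
here by `j = j'+1`), the hole probability satisfies
`P(∑_j X_j = 0) = ∏_{j≥1} (1 - ρ^{2j})`; moreover, as `ρ → 1⁻`,
`log ∏_{j≥1} (1 - ρ^{2j}) = -(π²/6 + o(1))/(1-ρ²)`, and consequently
`P(N = 0) = exp(-(π²/12 + o(1))/(1-ρ))`. -/
theorem bernoulli_hole_probability
    {Ω : Type*} [MeasurableSpace Ω] (P : Measure Ω) [IsProbabilityMeasure P]
    (ρ : ℝ) (hρ : ρ ∈ Set.Ioo (0 : ℝ) 1)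
    (X : ℕ → Ω → ℝ) (hmeas : ∀ j, Measurable (X j))
    (hind : iIndepFun X P)
    (hval : ∀ j ω, X j ω = 0 ∨ X j ω = 1)
    (hdist : ∀ j, P {ω | X j ω = 1} = ENNReal.ofReal (ρ ^ (2 * (j + 1)))) :
    (P {ω | (∑' j, X j ω) = 0}
        = ENNReal.ofReal (∏' j : ℕ, (1 - ρ ^ (2 * (j + 1))))) ∧
    Tendsto (fun r : ℝ => (1 - r ^ 2) * Real.log (∏' j : ℕ, (1 - r ^ (2 * (j + 1)))))
      (nhdsWithin 1 (Set.Iio 1)) (nhds (-(Real.pi ^ 2 / 6))) ∧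
    Tendsto (fun r : ℝ => (1 - r) * Real.log (∏' j : ℕ, (1 - r ^ (2 * (j + 1)))))
      (nhdsWithin 1 (Set.Iio 1)) (nhds (-(Real.pi ^ 2 / 12))) :=
  bernoulli_hole_probability_general P ρ hρ X hmeas hind hval hdist
end

section
/- Let f₀, f₁ be holomorphic on a domain G with |f₀|² + |f₁|² > 0 everywhere. Then the Laplacian of (1/2) log(|f₀|² + |f₁|²) equals 2|f₀'f₁ - f₀f₁'|²/(|f₀|² + |f₁|²)², wherever defined; i.e., the density of the pull-back Fubini–Study measure (1/2π)Δ log‖(f₀,f₁)‖ with respect to area measure is (1/π)|f₀'f₁ - f₀f₁'|²/(|f₀|²+|f₁|²)². -/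
/-- The classical Laplacian of a function `φ : ℂ → ℝ` (sum of the second
derivatives in the directions `1` and `i`). -/
noncomputable def laplacian (φ : ℂ → ℝ) (z : ℂ) : ℝ :=
  fderiv ℝ (fun w => fderiv ℝ φ w 1) z 1 +
    fderiv ℝ (fun w => fderiv ℝ φ w Complex.I) z Complex.I

/-!
With `u = ‖f₀‖² + ‖f₁‖²`, the chain rule for the Laplacian gives
`Δ (½ log u) = (u Δu - ‖∇u‖²) / (2u²)`. Since real parts of holomorphic functions are harmonic,
`Δ ‖f‖² = Δ (Re f)² + Δ (Re (-i f))² = 4 ‖f'‖²`, and `∇u` is the complex number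
`2 (conj f₀ f₀' + conj f₁ f₁')`. Lagrange's identity
`(‖a‖² + ‖b‖²)(‖c‖² + ‖d‖²) - ‖conj a c + conj b d‖² = ‖c b - a d‖²` finishes the computation.
-/

open Complex Filter Topology
open scoped Laplacian ComplexConjugate

noncomputable def gradNormSq (u : ℂ → ℝ) (z : ℂ) : ℝ :=
  fderiv ℝ u z 1 ^ 2 + fderiv ℝ u z I ^ 2

theorem fderiv_fderiv_comp_apply_apply {E : Type*} [NormedAddCommGroup E] [NormedSpace ℝ E]
    {h : ℝ → ℝ} {u : E → ℝ} {z : E} (hh : ContDiffAt ℝ 2 h (u z))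
    (hu : ContDiffAt ℝ 2 u z) (v : E) :
    fderiv ℝ (fun w => fderiv ℝ (fun x => h (u x)) w v) z v =
      deriv (deriv h) (u z) * fderiv ℝ u z v ^ 2 +
        deriv h (u z) * fderiv ℝ (fun w => fderiv ℝ u w v) z v := by
  have hfirst : (fun w => fderiv ℝ (fun x => h (u x)) w v) =ᶠ[𝓝 z]
      fun w => deriv h (u w) * fderiv ℝ u w v := by
    filter_upwards [hu.eventually (by simp),
      hu.continuousAt.eventually (hh.eventually (by simp))] with w huw hhw
    have : HasFDerivAt (fun x => h (u x)) (deriv h (u w) • fderiv ℝ u w) w :=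
      (hhw.differentiableAt two_ne_zero).hasDerivAt.comp_hasFDerivAt w
        (huw.differentiableAt two_ne_zero).hasFDerivAt
    simp [this.fderiv]
  have hh' : HasDerivAt (deriv h) (deriv (deriv h) (u z)) (u z) := by
    have : DifferentiableAt ℝ (fun x => fderiv ℝ h x 1) (u z) :=
      ((hh.fderiv_right one_add_one_eq_two.le).differentiableAt one_ne_zero).clm_apply
        (differentiableAt_const 1)
    exact this.hasDerivAt
  have hu' : DifferentiableAt ℝ (fun w => fderiv ℝ u w v) z :=
    ((hu.fderiv_right one_add_one_eq_two.le).differentiableAt one_ne_zero).clm_apply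
      (differentiableAt_const v)
  have hprod : HasFDerivAt (fun w => deriv h (u w) * fderiv ℝ u w v)
      (deriv h (u z) • fderiv ℝ (fun w => fderiv ℝ u w v) z +
        fderiv ℝ u z v • deriv (deriv h) (u z) • fderiv ℝ u z) z :=
    (hh'.comp_hasFDerivAt z (hu.differentiableAt two_ne_zero).hasFDerivAt).mul hu'.hasFDerivAt
  rw [hfirst.fderiv_eq, hprod.fderiv]
  simp only [add_apply, smul_apply, smul_eq_mul]
  ring

theorem laplacian_comp {h : ℝ → ℝ} {u : ℂ → ℝ} {z : ℂ} (hh : ContDiffAt ℝ 2 h (u z))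
    (hu : ContDiffAt ℝ 2 u z) :
    laplacian (fun w => h (u w)) z =
      deriv (deriv h) (u z) * gradNormSq u z + deriv h (u z) * laplacian u z := by
  rw [laplacian, laplacian, gradNormSq, fderiv_fderiv_comp_apply_apply hh hu,
    fderiv_fderiv_comp_apply_apply hh hu]
  ring

theorem ContDiffAt.laplacian_eq {φ : ℂ → ℝ} {z : ℂ} (hφ : ContDiffAt ℝ 2 φ z) :
    laplacian φ z = Δ φ z := by
  have hd : DifferentiableAt ℝ (fderiv ℝ φ) z :=
    (hφ.fderiv_right one_add_one_eq_two.le).differentiableAt one_ne_zero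
  simp only [InnerProductSpace.laplacian_eq_iteratedFDeriv_complexPlane, laplacian,
    iteratedFDeriv_two_apply, fderiv_clm_apply hd (differentiableAt_const _)]
  simp

theorem laplacian_add {φ ψ : ℂ → ℝ} {z : ℂ} (hφ : ContDiffAt ℝ 2 φ z) (hψ : ContDiffAt ℝ 2 ψ z) :
    laplacian (fun w => φ w + ψ w) z = laplacian φ z + laplacian ψ z := by
  rw [(hφ.add hψ).laplacian_eq, hφ.laplacian_eq, hψ.laplacian_eq, ← hφ.laplacian_add hψ]
  rfl

theorem AnalyticAt.laplacian_re {f : ℂ → ℂ} {z : ℂ} (hf : AnalyticAt ℂ f z) :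
    laplacian (fun w => (f w).re) z = 0 := by
  obtain ⟨hC2, hΔ⟩ := hf.harmonicAt_re
  rw [hC2.laplacian_eq, hΔ.eq_of_nhds]
  rfl

theorem gradNormSq_eq_of_fderiv_apply {u : ℂ → ℝ} {z a : ℂ}
    (hu : ∀ v, fderiv ℝ u z v = (a * v).re) : gradNormSq u z = ‖a‖ ^ 2 := by
  rw [gradNormSq, hu, hu, Complex.sq_norm, normSq_apply]
  simp only [mul_one, mul_re, I_re, mul_zero, I_im, zero_sub, even_two, Even.neg_pow]
  ring

theorem fderiv_re_comp_apply {f : ℂ → ℂ} {z : ℂ} (hf : DifferentiableAt ℂ f z) (v : ℂ) :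
    fderiv ℝ (fun w => (f w).re) z v = (deriv f z * v).re := by
  have : HasFDerivAt (fun w => (f w).re)
      (reCLM.comp ((ContinuousLinearMap.toSpanSingleton ℂ (deriv f z)).restrictScalars ℝ)) z :=
    reCLM.hasFDerivAt.comp z (hf.hasDerivAt.hasFDerivAt.restrictScalars ℝ)
  simp [this.fderiv, mul_comm]

theorem fderiv_norm_sq_comp_apply {f : ℂ → ℂ} {z : ℂ} (hf : DifferentiableAt ℂ f z) (v : ℂ) :
    fderiv ℝ (fun w => ‖f w‖ ^ 2) z v = (2 * (conj (f z) * deriv f z) * v).re := by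
  rw [(hf.hasDerivAt.hasFDerivAt.restrictScalars ℝ).norm_sq.fderiv]
  simp only [smul_apply, ContinuousLinearMap.comp_apply, ContinuousLinearMap.coe_restrictScalars',
    ContinuousLinearMap.toSpanSingleton_apply, smul_eq_mul, coe_innerSL_apply, Complex.inner,
    nsmul_eq_mul, Nat.cast_ofNat, mul_re, mul_im, conj_re, conj_im, re_ofNat, im_ofNat]
  ring

theorem AnalyticAt.contDiffAt_norm_sq {f : ℂ → ℂ} {z : ℂ} (hf : AnalyticAt ℂ f z) :
    ContDiffAt ℝ 2 (fun w => ‖f w‖ ^ 2) z :=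
  (contDiff_norm_sq ℝ).contDiffAt.comp z (hf.contDiffAt.restrict_scalars ℝ)

theorem AnalyticAt.laplacian_re_sq {f : ℂ → ℂ} {z : ℂ} (hf : AnalyticAt ℂ f z) :
    laplacian (fun w => (f w).re ^ 2) z = 2 * ‖deriv f z‖ ^ 2 := by
  rw [laplacian_comp (h := fun x => x ^ 2) (contDiff_id.pow 2).contDiffAt hf.harmonicAt_re.1,
    gradNormSq_eq_of_fderiv_apply (fderiv_re_comp_apply hf.differentiableAt), hf.laplacian_re]
  have hderiv : deriv (fun x : ℝ => x ^ 2) = fun x => 2 * x := by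
    funext x
    simp
  simp [hderiv]

theorem AnalyticAt.laplacian_norm_sq {f : ℂ → ℂ} {z : ℂ} (hf : AnalyticAt ℂ f z) :
    laplacian (fun w => ‖f w‖ ^ 2) z = 4 * ‖deriv f z‖ ^ 2 := by
  have hg : AnalyticAt ℂ (fun w => -I * f w) z := analyticAt_const.mul hf
  have hsplit : (fun w => ‖f w‖ ^ 2) = fun w => (f w).re ^ 2 + (-I * f w).re ^ 2 := by
    funext w
    simp only [Complex.sq_norm, normSq_apply, neg_mul, neg_re, mul_re, I_re, zero_mul, I_im,
      one_mul, zero_sub, neg_neg]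
    ring
  rw [hsplit, laplacian_add (hf.harmonicAt_re.1.pow 2) (hg.harmonicAt_re.1.pow 2),
    hf.laplacian_re_sq, hg.laplacian_re_sq, deriv_const_mul _ hf.differentiableAt, norm_mul,
    norm_neg, norm_I]
  ring

theorem laplacian_half_log {u : ℂ → ℝ} {z : ℂ} (hu : ContDiffAt ℝ 2 u z) (hz : u z ≠ 0) :
    laplacian (fun w => (1 / 2 : ℝ) * Real.log (u w)) z =
      (u z * laplacian u z - gradNormSq u z) / (2 * u z ^ 2) := by
  rw [laplacian_comp (h := fun x => (1 / 2 : ℝ) * Real.log x)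
    (contDiffAt_const.mul (Real.contDiffAt_log.2 hz)) hu]
  simp only [deriv_const_mul_field', Real.deriv_log', deriv_inv']
  field_simp
  ring

theorem norm_sq_add_mul_norm_sq_add_sub_norm_sq (a b c d : ℂ) :
    (‖a‖ ^ 2 + ‖b‖ ^ 2) * (‖c‖ ^ 2 + ‖d‖ ^ 2) - ‖conj a * c + conj b * d‖ ^ 2 =
      ‖c * b - a * d‖ ^ 2 := by
  simp only [Complex.sq_norm, normSq_apply, add_re, add_im, sub_re, sub_im, mul_re, mul_im,
    conj_re, conj_im]
  ring

theorem gradNormSq_norm_sq_add_norm_sq {f g : ℂ → ℂ} {z : ℂ} (hf : DifferentiableAt ℂ f z)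
    (hg : DifferentiableAt ℂ g z) :
    gradNormSq (fun w => ‖f w‖ ^ 2 + ‖g w‖ ^ 2) z =
      4 * ‖conj (f z) * deriv f z + conj (g z) * deriv g z‖ ^ 2 := by
  have hnorm : (4 : ℝ) = ‖(2 : ℂ)‖ ^ 2 := by norm_num
  rw [hnorm, ← mul_pow, ← norm_mul]
  refine gradNormSq_eq_of_fderiv_apply fun v => ?_
  rw [fderiv_fun_add ((hf.restrictScalars ℝ).norm_sq ℝ) ((hg.restrictScalars ℝ).norm_sq ℝ),
    add_apply, fderiv_norm_sq_comp_apply hf, fderiv_norm_sq_comp_apply hg, ← add_re]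
  ring_nf

/-- Fubini–Study derivative formula (two-dimensional case): if `f₀, f₁` are
holomorphic on an open set `G` with no common zero, then
`Δ ((1/2) log(|f₀|² + |f₁|²)) = 2 |f₀'f₁ - f₀f₁'|² / (|f₀|² + |f₁|²)²` on `G`. -/
theorem laplacian_log_norm_two_functions
    (G : Set ℂ) (hG : IsOpen G)
    (f₀ f₁ : ℂ → ℂ) (hf₀ : DifferentiableOn ℂ f₀ G) (hf₁ : DifferentiableOn ℂ f₁ G)
    (hpos : ∀ z ∈ G, 0 < ‖f₀ z‖ ^ 2 + ‖f₁ z‖ ^ 2) :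
    ∀ z ∈ G,
      laplacian (fun w => (1 / 2 : ℝ) *
          Real.log (‖f₀ w‖ ^ 2 + ‖f₁ w‖ ^ 2)) z
        = 2 * ‖deriv f₀ z * f₁ z - f₀ z * deriv f₁ z‖ ^ 2 /
            (‖f₀ z‖ ^ 2 + ‖f₁ z‖ ^ 2) ^ 2 := by
  intro z hz
  have h₀ : AnalyticAt ℂ f₀ z := hf₀.analyticAt (hG.mem_nhds hz)
  have h₁ : AnalyticAt ℂ f₁ z := hf₁.analyticAt (hG.mem_nhds hz)
  rw [laplacian_half_log (h₀.contDiffAt_norm_sq.add h₁.contDiffAt_norm_sq) (hpos z hz).ne',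
    laplacian_add h₀.contDiffAt_norm_sq h₁.contDiffAt_norm_sq, h₀.laplacian_norm_sq,
    h₁.laplacian_norm_sq, gradNormSq_norm_sq_add_norm_sq h₀.differentiableAt h₁.differentiableAt,
    ← norm_sq_add_mul_norm_sq_add_sub_norm_sq (f₀ z) (f₁ z) (deriv f₀ z) (deriv f₁ z)]
  field_simp
  ring
end
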